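/- arXiv:math/0106243 — 2 statements merged into one kernel-verified Lean document; each statement's English description precedes it below -/
import Mathlib

section
/- Let J be a metric tree with metric ρ and let 0 < λ < 1. Then the kernel K(a,b) = λ^{ρ(a,b)} on Vert(J) × Vert(J) is positive definite; consequently there exists a real Hilbert space containing vectors e_a, a ∈ Vert(J), with ⟨e_a, e_b⟩ = λ^{ρ(a,b)}. -/
/-!
Root the tree at `r` and build unit vectors of `ℓ²(V)` from the root outwards: `e r = δ r`, and
`e a = λ^ℓ(a,p) • e p + √(1 - λ^(2ℓ(a,p))) • δ a` for `a ≠ r` with parent `p`. The coordinate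
`δ b` is orthogonal to `e a` unless `b` lies on the path from `a` to the root. Of two distinct
vertices, one is off the other's root path; if `b` (with parent `p`) is off the path of `a`, then
`⟪e a, e b⟫ = λ^ℓ(b,p) ⟪e a, e p⟫` and `ρ(a,b) = ℓ(b,p) + ρ(a,p)`. Induction on the sum of the
depths gives `⟪e a, e b⟫ = λ^ρ(a,b)`, and a Gram kernel is positive definite.
-/

open scoped RealInnerProductSpace

lemma sum_sum_mul_inner_nonneg {ι E : Type*} [NormedAddCommGroup E] [InnerProductSpace ℝ E]
    (s : Finset ι) (c : ι → ℝ) (e : ι → E) :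
    0 ≤ ∑ i ∈ s, ∑ j ∈ s, c i * c j * ⟪e i, e j⟫ := by
  have hgram : ∑ i ∈ s, ∑ j ∈ s, c i * c j * ⟪e i, e j⟫ =
      ⟪∑ i ∈ s, c i • e i, ∑ j ∈ s, c j • e j⟫ := by
    simp_rw [sum_inner, inner_sum, real_inner_smul_left, real_inner_smul_right, mul_assoc]
  exact hgram ▸ real_inner_self_nonneg

lemma sq_sqrt_one_sub_rpow_sq {lam x : ℝ} (hl0 : 0 ≤ lam) (hl1 : lam ≤ 1) (hx : 0 ≤ x) :
    √(1 - (lam ^ x) ^ 2) ^ 2 = 1 - (lam ^ x) ^ 2 := by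
  have h₀ := Real.rpow_nonneg hl0 x
  have h₁ := Real.rpow_le_one hl0 hl1 hx
  exact Real.sq_sqrt (by nlinarith)

namespace SimpleGraph.IsTree

open Walk

variable {V : Type*} {G : SimpleGraph V} (hG : G.IsTree)

noncomputable def path (a b : V) : G.Walk a b := (hG.existsUnique_path a b).exists.choose

lemma isPath_path (a b : V) : (hG.path a b).IsPath :=
  (hG.existsUnique_path a b).exists.choose_spec

lemma eq_path {a b : V} (p : G.Walk a b) (hp : p.IsPath) : p = hG.path a b :=
  (hG.existsUnique_path a b).unique hp (hG.isPath_path a b)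

lemma path_self (a : V) : hG.path a a = nil :=
  (hG.eq_path nil IsPath.nil).symm

lemma reverse_path (a b : V) : (hG.path a b).reverse = hG.path b a :=
  hG.eq_path _ (hG.isPath_path a b).reverse

lemma mem_support_path_or {a b x : V} (r : V) (hx : x ∈ (hG.path a b).support) :
    x ∈ (hG.path a r).support ∨ x ∈ (hG.path b r).support := by
  classical
  rw [← hG.eq_path _ ((hG.path a r).append (hG.path b r).reverse).bypass_isPath] at hx
  simpa [mem_support_append_iff] using support_bypass_subset_support _ hx

lemma eq_of_mem_support_path {r a b : V} (hb : b ∈ (hG.path a r).support)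
    (ha : a ∈ (hG.path b r).support) : a = b := by
  classical
  by_contra hab
  have h₁ := length_dropUntil_lt_length hb (Ne.symm hab)
  have h₂ := length_dropUntil_lt_length ha hab
  have e₁ := congrArg length (hG.eq_path _ ((hG.isPath_path a r).dropUntil hb))
  have e₂ := congrArg length (hG.eq_path _ ((hG.isPath_path b r).dropUntil ha))
  omega

noncomputable def parent (r a : V) : V := (hG.path a r).snd

lemma adj_parent {r a : V} (ha : a ≠ r) : G.Adj a (hG.parent r a) :=
  adj_snd (not_nil_of_ne ha)

lemma path_eq_cons {r a : V} (ha : a ≠ r) :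
    hG.path a r = cons (hG.adj_parent ha) (hG.path (hG.parent r a) r) := by
  conv_lhs => rw [← cons_tail_eq (hG.path a r) (not_nil_of_ne ha)]
  rw [hG.eq_path _ (hG.isPath_path a r).tail]
  rfl

lemma length_path_parent_lt {r a : V} (ha : a ≠ r) :
    (hG.path (hG.parent r a) r).length < (hG.path a r).length := by
  rw [hG.path_eq_cons ha, length_cons]
  omega

lemma notMem_support_path_parent {r a : V} (ha : a ≠ r) :
    a ∉ (hG.path (hG.parent r a) r).support := by
  have := hG.isPath_path a r
  rw [hG.path_eq_cons ha, cons_isPath_iff] at this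
  exact this.2

lemma sum_path_eq_add_parent (ℓ : Sym2 V → ℝ) {r a b : V} (hb : b ∉ (hG.path a r).support) :
    ((hG.path a b).edges.map ℓ).sum =
      ℓ s(b, hG.parent r b) + ((hG.path a (hG.parent r b)).edges.map ℓ).sum := by
  have hbr : b ≠ r := by rintro rfl; exact hb (end_mem_support _)
  have hb' : b ∉ (hG.path (hG.parent r b) a).support := fun h =>
    (hG.mem_support_path_or r h).elim (hG.notMem_support_path_parent hbr) hb
  have hpath : hG.path a b = (cons (hG.adj_parent hbr) (hG.path (hG.parent r b) a)).reverse :=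
    (hG.eq_path _ (((cons_isPath_iff _ _).2 ⟨hG.isPath_path _ _, hb'⟩).reverse)).symm
  rw [hpath, ← hG.reverse_path a]
  simp [Sym2.eq_swap, add_comm]

section Embedding

variable [DecidableEq V] (ℓ : Sym2 V → ℝ) (lam : ℝ) (r : V)

noncomputable def kernelEmbedding (a : V) : lp (fun _ : V => ℝ) 2 :=
  if ha : a = r then lp.single 2 r 1
  else lam ^ ℓ s(a, hG.parent r a) • kernelEmbedding (hG.parent r a) +
    √(1 - (lam ^ ℓ s(a, hG.parent r a)) ^ 2) • lp.single 2 a 1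
termination_by (hG.path a r).length
decreasing_by exact hG.length_path_parent_lt ha

lemma kernelEmbedding_root : hG.kernelEmbedding ℓ lam r r = lp.single 2 r 1 := by
  rw [kernelEmbedding, dif_pos rfl]

lemma kernelEmbedding_of_ne {a : V} (ha : a ≠ r) :
    hG.kernelEmbedding ℓ lam r a =
      lam ^ ℓ s(a, hG.parent r a) • hG.kernelEmbedding ℓ lam r (hG.parent r a) +
        √(1 - (lam ^ ℓ s(a, hG.parent r a)) ^ 2) • lp.single 2 a 1 := by
  rw [kernelEmbedding, dif_neg ha]

lemma kernelEmbedding_apply_of_notMem_support {a c : V} (hc : c ∉ (hG.path a r).support) :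
    hG.kernelEmbedding ℓ lam r a c = 0 := by
  by_cases ha : a = r
  · subst ha
    rw [kernelEmbedding_root, lp.single_apply_ne 2 _ _ (by simpa [path_self] using hc)]
  · rw [hG.path_eq_cons ha, support_cons, List.mem_cons, not_or] at hc
    rw [kernelEmbedding_of_ne _ _ _ _ ha]
    simp only [lp.coeFn_add, lp.coeFn_smul, Pi.add_apply, Pi.smul_apply, smul_eq_mul]
    rw [kernelEmbedding_apply_of_notMem_support hc.2, lp.single_apply_ne 2 _ _ hc.1]
    simp
termination_by (hG.path a r).length
decreasing_by exact hG.length_path_parent_lt ha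

lemma inner_kernelEmbedding_single_of_notMem_support {a c : V}
    (hc : c ∉ (hG.path a r).support) :
    ⟪hG.kernelEmbedding ℓ lam r a, lp.single 2 c 1⟫ = 0 := by
  simp [lp.inner_single_right, hG.kernelEmbedding_apply_of_notMem_support ℓ lam r hc]

variable {ℓ lam} (hl0 : 0 < lam)
include hl0

lemma inner_kernelEmbedding_of_notMem_support {a b : V} (hb : b ∉ (hG.path a r).support)
    (ih : ⟪hG.kernelEmbedding ℓ lam r a, hG.kernelEmbedding ℓ lam r (hG.parent r b)⟫ =
      lam ^ ((hG.path a (hG.parent r b)).edges.map ℓ).sum) :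
    ⟪hG.kernelEmbedding ℓ lam r a, hG.kernelEmbedding ℓ lam r b⟫ =
      lam ^ ((hG.path a b).edges.map ℓ).sum := by
  have hbr : b ≠ r := by rintro rfl; exact hb (end_mem_support _)
  rw [kernelEmbedding_of_ne _ _ _ _ hbr, inner_add_right, real_inner_smul_right,
    real_inner_smul_right, ih, hG.inner_kernelEmbedding_single_of_notMem_support ℓ lam r hb,
    hG.sum_path_eq_add_parent ℓ hb, Real.rpow_add hl0, mul_zero, add_zero]

variable (hℓ : ∀ e ∈ G.edgeSet, 0 ≤ ℓ e) (hl1 : lam ≤ 1)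
include hℓ hl1

lemma inner_kernelEmbedding_self (a : V) :
    ⟪hG.kernelEmbedding ℓ lam r a, hG.kernelEmbedding ℓ lam r a⟫ = 1 := by
  by_cases ha : a = r
  · subst ha
    simp [kernelEmbedding_root]
  · have horth := hG.inner_kernelEmbedding_single_of_notMem_support ℓ lam r
      (hG.notMem_support_path_parent ha)
    have hsq := sq_sqrt_one_sub_rpow_sq hl0.le hl1 (hℓ _ (G.mem_edgeSet.2 (hG.adj_parent ha)))
    have hδ : ⟪(lp.single 2 a 1 : lp (fun _ : V => ℝ) 2), lp.single 2 a 1⟫ = 1 := by simp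
    have ih := inner_kernelEmbedding_self (hG.parent r a)
    rw [kernelEmbedding_of_ne _ _ _ _ ha]
    simp only [inner_add_left, inner_add_right, real_inner_smul_left, real_inner_smul_right,
      real_inner_comm _ (lp.single 2 a 1), horth, ih, hδ]
    nlinarith
termination_by (hG.path a r).length
decreasing_by exact hG.length_path_parent_lt ha

lemma inner_kernelEmbedding (a b : V) :
    ⟪hG.kernelEmbedding ℓ lam r a, hG.kernelEmbedding ℓ lam r b⟫ =
      lam ^ ((hG.path a b).edges.map ℓ).sum := by
  by_cases hb : b ∈ (hG.path a r).support
  · by_cases ha : a ∈ (hG.path b r).support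
    · obtain rfl := hG.eq_of_mem_support_path hb ha
      rw [hG.inner_kernelEmbedding_self r hl0 hℓ hl1, path_self]
      simp
    · rw [real_inner_comm, ← hG.reverse_path b, edges_reverse, List.map_reverse, List.sum_reverse]
      exact hG.inner_kernelEmbedding_of_notMem_support r hl0 ha
        (inner_kernelEmbedding b (hG.parent r a))
  · exact hG.inner_kernelEmbedding_of_notMem_support r hl0 hb
      (inner_kernelEmbedding a (hG.parent r b))
termination_by (hG.path a r).length + (hG.path b r).length
decreasing_by
  · have := hG.length_path_parent_lt (a := a) (r := r) (by rintro rfl; exact ha (end_mem_support _))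
    omega
  · have := hG.length_path_parent_lt (a := b) (r := r) (by rintro rfl; exact hb (end_mem_support _))
    omega

end Embedding

end SimpleGraph.IsTree

theorem kernel_positive_definite_general {V : Type}
    (G : SimpleGraph V) (hG : G.IsTree)
    (ℓ : Sym2 V → ℝ) (hℓ : ∀ e ∈ G.edgeSet, 0 < ℓ e)
    (ρ : V → V → ℝ)
    (hρ : ∀ (a b : V) (p : G.Walk a b), p.IsPath → ρ a b = (p.edges.map ℓ).sum)
    (lam : ℝ) (hl0 : 0 < lam) (hl1 : lam < 1) :
    (∀ (s : Finset V) (c : V → ℝ),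
      0 ≤ ∑ i ∈ s, ∑ j ∈ s, c i * c j * lam ^ ρ i j) ∧
    ∃ (H : Type) (_ : NormedAddCommGroup H) (_ : InnerProductSpace ℝ H)
      (_ : CompleteSpace H) (e : V → H),
      ∀ a b : V, ⟪e a, e b⟫ = lam ^ ρ a b := by
  classical
  obtain ⟨r⟩ := hG.connected.nonempty
  have he (a b : V) :
      ⟪hG.kernelEmbedding ℓ lam r a, hG.kernelEmbedding ℓ lam r b⟫ = lam ^ ρ a b := by
    rw [hρ a b _ (hG.isPath_path a b)]
    exact hG.inner_kernelEmbedding r hl0 (fun e he ↦ (hℓ e he).le) hl1.le a b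
  refine ⟨fun s c ↦ ?_, lp (fun _ : V => ℝ) 2, inferInstance, inferInstance, inferInstance, _, he⟩
  simpa only [he] using sum_sum_mul_inner_nonneg s c (hG.kernelEmbedding ℓ lam r)

/-- For a metric tree `(Vert J, ρ)` (distances are sums of positive edge lengths
along the unique path) and `0 < λ < 1`, the kernel `K(a,b) = λ^{ρ(a,b)}` is
positive definite, and consequently there is a real Hilbert space with vectors
`e_a` such that `⟪e_a, e_b⟫ = λ^{ρ(a,b)}`. -/
theorem kernel_positive_definite {V : Type} [Countable V]
    (G : SimpleGraph V) (hG : G.IsTree)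
    (ℓ : Sym2 V → ℝ) (hℓ : ∀ e ∈ G.edgeSet, 0 < ℓ e)
    (ρ : V → V → ℝ)
    (hρ : ∀ (a b : V) (p : G.Walk a b), p.IsPath → ρ a b = (p.edges.map ℓ).sum)
    (lam : ℝ) (hl0 : 0 < lam) (hl1 : lam < 1) :
    (∀ (s : Finset V) (c : V → ℝ),
      0 ≤ ∑ i ∈ s, ∑ j ∈ s, c i * c j * lam ^ ρ i j) ∧
    ∃ (H : Type) (_ : NormedAddCommGroup H) (_ : InnerProductSpace ℝ H)
      (_ : CompleteSpace H) (e : V → H),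
      ∀ a b : V, ⟪e a, e b⟫ = lam ^ ρ a b :=
  kernel_positive_definite_general G hG ℓ hℓ ρ hρ lam hl0 hl1
end

section
/- Let S₁, S₂ be disjoint subtrees of a metric tree J with nearest vertices b ∈ S₁ and c ∈ S₂. Let Q : H_λ(S₁) → H_λ(S₂) be the restriction to H_λ(S₁) of the orthogonal projection onto H_λ(S₂). Then the image of Q is the line spanned by e_c, and the kernel of Q is the orthogonal complement of e_b within H_λ(S₁). -/
open scoped RealInnerProductSpace

/-- A subtree of a graph: a nonempty vertex set inducing a connected subgraph. -/
def IsSubtree {V : Type*} (G : SimpleGraph V) (S : Set V) : Prop :=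
  S.Nonempty ∧ (G.induce S).Connected

/-- The closed subspace `H_λ(S)` spanned by the vectors `e_c`, `c ∈ Vert S`. -/
def Hlam {V H : Type*} [NormedAddCommGroup H] [InnerProductSpace ℝ H]
    (e : V → H) (S : Set V) : Submodule ℝ H :=
  (Submodule.span ℝ (e '' S)).topologicalClosure

lemma inner_zero_of_mem_Hlam {V H : Type*} [NormedAddCommGroup H] [InnerProductSpace ℝ H]
    (e : V → H) (S : Set V) (w : H) (h : ∀ z ∈ S, ⟪w, e z⟫ = 0) :
    ∀ y ∈ Hlam e S, ⟪w, y⟫ = 0 := by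
  have hle : Hlam e S ≤ (Submodule.span ℝ ({w} : Set H))ᗮ := by
    unfold Hlam
    refine Submodule.topologicalClosure_minimal _ ?_ (Submodule.isClosed_orthogonal _)
    rw [Submodule.span_le]
    rintro y ⟨z, hz, rfl⟩
    intro v hv
    rcases Submodule.mem_span_singleton.1 hv with ⟨t, rfl⟩
    rw [real_inner_smul_left, h z hz, mul_zero]
  intro y hy
  exact hle hy w (Submodule.mem_span_singleton_self w)

lemma mem_Hlam_of_mem {V H : Type*} [NormedAddCommGroup H] [InnerProductSpace ℝ H]
    (e : V → H) {S : Set V} {z : V} (hz : z ∈ S) : e z ∈ Hlam e S :=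
  Submodule.le_topologicalClosure _ (Submodule.subset_span ⟨z, hz, rfl⟩)

/-- Let `S₁, S₂` be disjoint subtrees with nearest vertices `b ∈ S₁`, `c ∈ S₂`,
and let `P` be the orthogonal projection of `H_λ(J)` onto `H_λ(S₂)`.  Then the
image of `H_λ(S₁)` under `P` is the line spanned by `e_c`, and the kernel of
`P` restricted to `H_λ(S₁)` is the orthocomplement of `e_b` within `H_λ(S₁)`. -/
theorem projection_between_disjoint_subtrees {V : Type*} (G : SimpleGraph V)
    (hG : G.IsTree) (ρ : V → V → ℝ)
    (lam : ℝ) (hl0 : 0 < lam) (hl1 : lam < 1)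
    {H : Type*} [NormedAddCommGroup H] [InnerProductSpace ℝ H] [CompleteSpace H]
    (e : V → H) (he : ∀ x y, ⟪e x, e y⟫ = lam ^ ρ x y)
    (S₁ S₂ : Set V) (hS₁ : IsSubtree G S₁) (hS₂ : IsSubtree G S₂)
    (hdisj : Disjoint S₁ S₂) (b c : V) (hb : b ∈ S₁) (hc : c ∈ S₂)
    (hmin : ∀ x ∈ S₁, ∀ y ∈ S₂, ρ b c ≤ ρ x y)
    (hpath : ∀ x ∈ S₁, ∀ y ∈ S₂, ρ x y = ρ x b + ρ b c + ρ c y)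
    (P : H →L[ℝ] H)
    (hPmem : ∀ x, P x ∈ Hlam e S₂)
    (hPorth : ∀ x, ∀ y ∈ Hlam e S₂, ⟪x - P x, y⟫ = 0) :
    P '' (Hlam e S₁ : Set H) = (Submodule.span ℝ ({e c} : Set H) : Set H) ∧
    {x | x ∈ Hlam e S₁ ∧ P x = 0} = {x | x ∈ Hlam e S₁ ∧ ⟪e b, x⟫ = 0} := by
  have hsym : ∀ x y, (lam : ℝ) ^ ρ x y = lam ^ ρ y x := fun x y => by
    rw [← he, ← he, real_inner_comm]
  -- P on basis vectors of S₁
  have hP_ex : ∀ x ∈ S₁, P (e x) = (lam ^ (ρ x b + ρ b c)) • e c := by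
    intro x hx
    set μ := lam ^ (ρ x b + ρ b c) with hμ
    have hw : ∀ z ∈ S₂, ⟪e x - μ • e c, e z⟫ = 0 := by
      intro z hz
      rw [inner_sub_left, real_inner_smul_left, he, he, hpath x hx z hz,
        Real.rpow_add hl0]
      ring
    set d := P (e x) - μ • e c with hd
    have hd₂ : d ∈ Hlam e S₂ :=
      Submodule.sub_mem _ (hPmem _) (Submodule.smul_mem _ _ (mem_Hlam_of_mem e hc))
    have h1 : ⟪e x - μ • e c, d⟫ = 0 := inner_zero_of_mem_Hlam e S₂ _ hw d hd₂
    have h2 : ⟪e x - P (e x), d⟫ = 0 := hPorth _ d hd₂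
    have h3 : ⟪d, d⟫ = 0 := by
      have : ⟪d, d⟫ = ⟪e x - μ • e c, d⟫ - ⟪e x - P (e x), d⟫ := by
        rw [← inner_sub_left]
        congr 1
        rw [hd]
        abel
      rw [this, h1, h2, sub_zero]
    have := inner_self_eq_zero.1 h3
    exact sub_eq_zero.1 this
  -- the formula on all of Hlam e S₁
  have hT : ∀ v ∈ Hlam e S₁, P v = (lam ^ ρ b c * ⟪e b, v⟫) • e c := by
    set T : H →L[ℝ] H :=
      P - ContinuousLinearMap.smulRight ((lam ^ ρ b c : ℝ) • (innerSL ℝ (e b))) (e c) with hTdef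
    have hker : Hlam e S₁ ≤ LinearMap.ker (T : H →ₗ[ℝ] H) := by
      unfold Hlam
      refine Submodule.topologicalClosure_minimal _ ?_ (ContinuousLinearMap.isClosed_ker T)
      rw [Submodule.span_le]
      rintro y ⟨x, hx, rfl⟩
      simp only [SetLike.mem_coe, LinearMap.mem_ker]
      show P (e x) - (lam ^ ρ b c * ⟪e b, e x⟫) • e c = 0
      rw [hP_ex x hx, he, hsym b x, Real.rpow_add hl0, mul_comm, sub_self]
    intro v hv
    have h0 : T v = 0 := hker hv
    have : P v - (lam ^ ρ b c * ⟪e b, v⟫) • e c = 0 := h0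
    exact sub_eq_zero.1 this
  have hec : e c ≠ 0 := by
    intro h
    have h2 := he c c
    rw [h, inner_zero_left] at h2
    exact (Real.rpow_pos_of_pos hl0 (ρ c c)).ne' h2.symm
  constructor
  · ext y
    constructor
    · rintro ⟨v, hv, rfl⟩
      exact Submodule.mem_span_singleton.2 ⟨_, (hT v hv).symm⟩
    · intro hy
      rcases Submodule.mem_span_singleton.1 hy with ⟨t, rfl⟩
      set μ := lam ^ (ρ b b + ρ b c) with hμ
      have hμpos : 0 < μ := Real.rpow_pos_of_pos hl0 _
      refine ⟨(t / μ) • e b, Submodule.smul_mem _ _ (mem_Hlam_of_mem e hb), ?_⟩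
      rw [map_smul, hP_ex b hb, smul_smul, div_mul_cancel₀ t hμpos.ne']
  · ext v
    simp only [Set.mem_setOf_eq]
    refine and_congr_right fun hv => ?_
    rw [hT v hv, smul_eq_zero]
    constructor
    · rintro (h | h)
      · rcases mul_eq_zero.1 h with h' | h'
        · exact absurd h' (Real.rpow_pos_of_pos hl0 _).ne'
        · exact h'
      · exact absurd h hec
    · intro h
      left
      rw [h, mul_zero]
end
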